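/- Let r, θ be real numbers with 1 ≤ θ, θ ≤ 0.5·r, and 0.5·r ≤ 3θ. Then the cubic q(x) = 1 − (r − θ)x + (r − 2θ)x² + θx³ has a real root α with −10 < α < −1; moreover, for any such root α, the product of the other two roots, which equals −1/(θα), satisfies 0 < −1/(θα) < 1. -/

import Mathlib

/-! The constraints on `r` and `θ` force `q(-1) = 1 + 2r - 4θ > 0` and
`q(-10) = 1 + 110r - 1210θ < 0`, so a root lies in `(-10, -1)` by the intermediate value
theorem; for any such root `θα < -1`, whence `0 < -1/(θα) < 1`. -/

def q (r θ x : ℝ) : ℝ :=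
  1 - (r - θ) * x + (r - 2 * θ) * x ^ 2 + θ * x ^ 3

lemma continuous_q (r θ : ℝ) : Continuous (q r θ) := by
  unfold q
  fun_prop

lemma q_neg_one (r θ : ℝ) : q r θ (-1) = 1 + 2 * r - 4 * θ := by
  unfold q
  ring

lemma q_neg_ten (r θ : ℝ) : q r θ (-10) = 1 + 110 * r - 1210 * θ := by
  unfold q
  ring

lemma neg_one_div_mem_Ioo_of_lt_neg_one {t : ℝ} (ht : t < -1) : -1 / t ∈ Set.Ioo 0 1 := by
  have ht0 : t < 0 := by linarith
  exact ⟨div_pos_of_neg_of_neg (by norm_num) ht0, (div_lt_one_of_neg ht0).mpr ht⟩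

/-- If `1 ≤ θ ≤ 0.5r ≤ 3θ` then `q` has a real root `α` with `-10 < α < -1`;
moreover for any such root `α`, the product of the other two roots, which
equals `-1/(θα)`, lies strictly between `0` and `1`. -/
theorem root_alpha (r θ : ℝ) (hθ1 : 1 ≤ θ) (hθ2 : θ ≤ 0.5 * r) (hθ3 : 0.5 * r ≤ 3 * θ) :
    (∃ α : ℝ, -10 < α ∧ α < -1 ∧ q r θ α = 0) ∧
    (∀ α : ℝ, -10 < α → α < -1 → q r θ α = 0 →
      0 < -1 / (θ * α) ∧ -1 / (θ * α) < 1) := by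
  constructor
  · have h_ten : q r θ (-10) < 0 := by rw [q_neg_ten]; linarith
    have h_one : 0 < q r θ (-1) := by rw [q_neg_one]; linarith
    obtain ⟨α, ⟨hα10, hα1⟩, hα⟩ :=
      intermediate_value_Ioo (by norm_num) (continuous_q r θ).continuousOn ⟨h_ten, h_one⟩
    exact ⟨α, hα10, hα1, hα⟩
  · intro α _ hα1 _
    exact neg_one_div_mem_Ioo_of_lt_neg_one (by nlinarith)
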